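/- (Pathwise Föllmer–Itô formula.) Let 1 ≤ p < 3, γ ∈ [0,1], and (π_n) an increasing sequence of partitions of [0,T] with mesh → 0. Let F ∈ C²(R^d, R) with α-Hölder continuous D²F for some α > max{p−2, 0}, and X ∈ V^p([0,T], R^d) with quadratic variation along (π_n). Then F(X_T) = F(X_0) + γ-∫_0^T DF(X_t) d^{π_n} X_t − ½(2γ−1) Σ_{1≤i,j≤d} ∫_0^T D²_{i,j}F(X_s) d^{π_n}[X^i,X^j]_s, where γ-∫_0^T DF(X_t) d^{π_n} X_t = lim_{n→∞} Σ_{[s,t]∈π_n} ⟨DF(X_s) + γ(DF(X_t)−DF(X_s)), X_t−X_s⟩. -/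

import Mathlib

open Finset Filter Topology

/-- A partition of `[a,b]` given by finitely many monotone grid points. -/
structure GridPartition (a b : ℝ) where
  n : ℕ
  t : Fin (n + 1) → ℝ
  mono : Monotone t
  first : t 0 = a
  last : t (Fin.last n) = b

namespace GridPartition

variable {a b : ℝ}

/-- The mesh of a partition: the largest interval length. -/
noncomputable def mesh (π : GridPartition a b) : ℝ :=
  ⨆ i : Fin π.n, (π.t i.succ - π.t i.castSucc)

/-- The Riemann-type sum `∑_{[s,t] ∈ π} F s t` over the intervals of a partition. -/
def rsum {E : Type*} [AddCommMonoid E] (π : GridPartition a b) (F : ℝ → ℝ → E) : E :=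
  ∑ i : Fin π.n, F (π.t i.castSucc) (π.t i.succ)

end GridPartition

/-- `RiemannLimit a b F L`: the Riemann-type sums of `F` over partitions of `[a,b]`
converge to `L` as the mesh tends to `0`. -/
def RiemannLimit {E : Type*} [SeminormedAddCommGroup E] (a b : ℝ) (F : ℝ → ℝ → E)
    (L : E) : Prop :=
  ∀ ε > 0, ∃ δ > 0, ∀ π : GridPartition a b, π.mesh < δ → ‖π.rsum F - L‖ < ε

/-- `X` has finite `p`-variation on `[a,b]` (boundedness of the partition sums). -/
def FinitePVar {E : Type*} [SeminormedAddCommGroup E] (p a b : ℝ) (X : ℝ → E) : Prop :=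
  ∃ M : ℝ, ∀ π : GridPartition a b,
    (∑ i : Fin π.n, ‖X (π.t i.succ) - X (π.t i.castSucc)‖ ^ p) ≤ M

/-- `X ∈ 𝒱^p([a,b])`: continuous and of finite `p`-variation. -/
def MemVp {E : Type*} [SeminormedAddCommGroup E] (p a b : ℝ) (X : ℝ → E) : Prop :=
  ContinuousOn X (Set.Icc a b) ∧ FinitePVar p a b X

/-- Finite `r`-variation for a two-parameter (remainder) function. -/
def FiniteRVar2 {E : Type*} [SeminormedAddCommGroup E] (r a b : ℝ) (R : ℝ → ℝ → E) : Prop :=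
  ∃ M : ℝ, ∀ π : GridPartition a b,
    (∑ i : Fin π.n, ‖R (π.t i.castSucc) (π.t i.succ)‖ ^ r) ≤ M

/-- Euclidean inner product on `Fin d → ℝ`. -/
def dot {d : ℕ} (x y : Fin d → ℝ) : ℝ := ∑ i, x i * y i

/-- Matrix-vector multiplication. -/
def mulVec' {d : ℕ} (M : Fin d → Fin d → ℝ) (v : Fin d → ℝ) : Fin d → ℝ :=
  fun i => ∑ j, M i j * v j

/-- `Y` is controlled by `X` with Gubinelli derivative `Y'` (vector case). -/
def Controlled {d : ℕ} (q r a b : ℝ) (X Y : ℝ → Fin d → ℝ)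
    (Y' : ℝ → Fin d → Fin d → ℝ) : Prop :=
  MemVp q a b Y' ∧
    FiniteRVar2 r a b (fun s t => Y t - Y s - mulVec' (Y' s) (X t - X s))

/-- `Y` is controlled by `X` with Gubinelli derivative `Y'` (scalar case). -/
def Controlled1 (q r a b : ℝ) (X Y Y' : ℝ → ℝ) : Prop :=
  MemVp q a b Y' ∧
    FiniteRVar2 r a b (fun s t => Y t - Y s - Y' s * (X t - X s))

/-- A control function on the simplex `Δ_T`. -/
def IsControlFun (T : ℝ) (ω : ℝ → ℝ → ℝ) : Prop :=
  ContinuousOn (fun z : ℝ × ℝ => ω z.1 z.2)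
      {z : ℝ × ℝ | 0 ≤ z.1 ∧ z.1 ≤ z.2 ∧ z.2 ≤ T} ∧
    (∀ s ∈ Set.Icc (0 : ℝ) T, ω s s = 0) ∧
    (∀ s t : ℝ, 0 ≤ s → s ≤ t → t ≤ T → 0 ≤ ω s t) ∧
    (∀ s u t : ℝ, 0 ≤ s → s ≤ u → u ≤ t → t ≤ T → ω s u + ω u t ≤ ω s t)

/-- An increasing (refining) sequence of partitions with mesh tending to zero. -/
def IncreasingSeq {T : ℝ} (π : ℕ → GridPartition 0 T) : Prop :=
  (∀ n, Set.range (π n).t ⊆ Set.range (π (n + 1)).t) ∧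
    Tendsto (fun n => (π n).mesh) atTop (𝓝 0)

/-- `f` has quadratic variation `Q` along the partition sequence `π` in the sense
of Föllmer. -/
def HasQV {T : ℝ} (π : ℕ → GridPartition 0 T) (f : ℝ → ℝ) (Q : ℝ → ℝ) : Prop :=
  ContinuousOn Q (Set.Icc 0 T) ∧
    ∀ u ∈ Set.Icc (0 : ℝ) T,
      Tendsto (fun n => ∑ i : Fin (π n).n,
          (f (min ((π n).t i.succ) u) - f (min ((π n).t i.castSucc) u)) ^ 2)
        atTop (𝓝 (Q u))

/-!
Second-order Taylor expansion on each interval `[s, t]` of `π n` gives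
`DF(X_s) ΔX + γ (DF(X_t) - DF(X_s)) ΔX = F(X_t) - F(X_s) + (γ - 1/2) D²F(X_s)(ΔX, ΔX) + R`
with `|R| ≤ C ‖ΔX‖ ^ (α + 2)`; since `α + 2 > p`, the remainders of a path of finite
`p`-variation sum to `o(1)` as the mesh vanishes. The quadratic sums
`∑ D²_{ij}F(X_s) ΔX^i ΔX^j` converge to the Stieltjes integrals against `[X^i, X^j]` by
Föllmer's argument: freeze the integrand on the intervals of a coarse partition `π m`
(an error controlled by its modulus of continuity on the mesh of `π m`); on each coarse interval
the block sums of `ΔX^i ΔX^j` over the refinements `π r` converge, by polarization, to the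
increment of `[X^i, X^j]`; and the discrete covariations have uniformly bounded total variation.
-/

namespace GridPartition

variable {a b : ℝ}

/-- The grid points extended to all of `ℕ`, constant equal to `b` from index `π.n` on. -/
def node (π : GridPartition a b) (i : ℕ) : ℝ :=
  π.t ⟨min i π.n, Nat.lt_succ_of_le (min_le_right _ _)⟩

theorem monotone_node (π : GridPartition a b) : Monotone π.node := fun _ _ hij =>
  π.mono (Fin.mk_le_mk.2 (min_le_min_right _ hij))

@[simp] theorem node_zero (π : GridPartition a b) : π.node 0 = a := by
  simpa [node] using π.first

theorem node_of_le (π : GridPartition a b) {i : ℕ} (h : π.n ≤ i) : π.node i = b := by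
  simpa [node, min_eq_right h, Fin.last] using π.last

theorem node_of_lt (π : GridPartition a b) {i : ℕ} (h : i < π.n + 1) : π.node i = π.t ⟨i, h⟩ := by
  simp [node, min_eq_left (Nat.lt_succ_iff.1 h)]

theorem left_le_right (π : GridPartition a b) : a ≤ b := by
  simpa [π.node_of_le le_rfl] using π.monotone_node (Nat.zero_le π.n)

theorem node_mem_Icc (π : GridPartition a b) (i : ℕ) : π.node i ∈ Set.Icc a b := by
  refine ⟨?_, ?_⟩
  · simpa using π.monotone_node (Nat.zero_le i)
  · simpa [π.node_of_le (le_max_left π.n i)] using π.monotone_node (le_max_right π.n i)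

theorem t_mem_Icc (π : GridPartition a b) (i : Fin (π.n + 1)) : π.t i ∈ Set.Icc a b :=
  π.node_of_lt i.isLt ▸ π.node_mem_Icc i

theorem rsum_eq_sum_range {E : Type*} [AddCommMonoid E] (π : GridPartition a b)
    (F : ℝ → ℝ → E) : π.rsum F = ∑ i ∈ range π.n, F (π.node i) (π.node (i + 1)) := by
  rw [rsum, ← Fin.sum_univ_eq_sum_range (fun i => F (π.node i) (π.node (i + 1)))]
  refine Finset.sum_congr rfl fun i _ => ?_
  rw [π.node_of_lt (Nat.lt_succ_of_lt i.isLt), π.node_of_lt (Nat.succ_lt_succ i.isLt)]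
  rfl

theorem rsum_sub {E : Type*} [AddCommGroup E] (π : GridPartition a b) (G : ℝ → E) :
    π.rsum (fun s t => G t - G s) = G b - G a := by
  rw [rsum_eq_sum_range, Finset.sum_range_sub (fun i => G (π.node i)), π.node_of_le le_rfl,
    node_zero]

theorem mesh_nonneg (π : GridPartition a b) : 0 ≤ π.mesh :=
  Real.iSup_nonneg fun i => sub_nonneg.2 (π.mono (Fin.castSucc_le_succ i))

theorem node_succ_sub_le_mesh (π : GridPartition a b) (i : ℕ) :
    π.node (i + 1) - π.node i ≤ π.mesh := by
  rcases lt_or_ge i π.n with h | h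
  · rw [π.node_of_lt (Nat.succ_lt_succ h), π.node_of_lt (Nat.lt_succ_of_lt h)]
    exact le_ciSup (f := fun i : Fin π.n => π.t i.succ - π.t i.castSucc)
      (Set.finite_range _).bddAbove ⟨i, h⟩
  · rw [π.node_of_le h, π.node_of_le (h.trans i.le_succ), sub_self]
    exact π.mesh_nonneg

section Refinement

variable {σ τ : GridPartition a b}

/-- Meaningful when `τ` refines `σ`; otherwise the set may be empty and `sInf ∅ = 0`. -/
noncomputable def refineIdx (σ τ : GridPartition a b) (k : ℕ) : ℕ :=
  sInf {i | τ.node i = σ.node k}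

theorem exists_node_eq (h : Set.range σ.t ⊆ Set.range τ.t) (k : ℕ) :
    ∃ i ≤ τ.n, τ.node i = σ.node k := by
  obtain ⟨j, hj⟩ := h ⟨_, rfl⟩
  exact ⟨j, Nat.lt_succ_iff.1 j.isLt, by rw [τ.node_of_lt j.isLt, hj]; rfl⟩

theorem node_refineIdx (h : Set.range σ.t ⊆ Set.range τ.t) (k : ℕ) :
    τ.node (σ.refineIdx τ k) = σ.node k :=
  Nat.sInf_mem (s := {i | τ.node i = σ.node k}) (by
    obtain ⟨i, -, hi⟩ := exists_node_eq h k
    exact ⟨i, hi⟩)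

theorem refineIdx_le (h : Set.range σ.t ⊆ Set.range τ.t) (k : ℕ) : σ.refineIdx τ k ≤ τ.n := by
  obtain ⟨i, hi, hik⟩ := exists_node_eq h k
  exact (Nat.sInf_le hik).trans hi

@[simp] theorem refineIdx_zero : σ.refineIdx τ 0 = 0 :=
  Nat.le_zero.1 (Nat.sInf_le (by simp))

theorem monotone_refineIdx (h : Set.range σ.t ⊆ Set.range τ.t) : Monotone (σ.refineIdx τ) := by
  intro k l hkl
  rcases (σ.monotone_node hkl).eq_or_lt with he | hlt
  · exact Nat.sInf_le ((node_refineIdx h l).trans he.symm)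
  · by_contra! hc
    have := τ.monotone_node hc.le
    rw [node_refineIdx h, node_refineIdx h] at this
    exact this.not_gt hlt

theorem node_mem_Icc_of_mem_Ico_refineIdx (h : Set.range σ.t ⊆ Set.range τ.t) {k i : ℕ}
    (hi : i ∈ Ico (σ.refineIdx τ k) (σ.refineIdx τ (k + 1))) :
    τ.node i ∈ Set.Icc (σ.node k) (σ.node (k + 1)) := by
  rw [Finset.mem_Ico] at hi
  exact ⟨node_refineIdx h k ▸ τ.monotone_node hi.1,
    node_refineIdx h (k + 1) ▸ τ.monotone_node hi.2.le⟩

/-- The sum of `w` over the intervals of `τ` that make up the `k`-th interval of `σ`. -/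
noncomputable def blockSum {E : Type*} [AddCommMonoid E] (σ τ : GridPartition a b)
    (w : ℝ → ℝ → E) (k : ℕ) : E :=
  ∑ i ∈ Ico (σ.refineIdx τ k) (σ.refineIdx τ (k + 1)), w (τ.node i) (τ.node (i + 1))

theorem sum_range_blockSum {E : Type*} [AddCommMonoid E] (h : Set.range σ.t ⊆ Set.range τ.t)
    (w : ℝ → ℝ → E) (K : ℕ) :
    ∑ k ∈ range K, σ.blockSum τ w k
      = ∑ i ∈ range (σ.refineIdx τ K), w (τ.node i) (τ.node (i + 1)) := by
  induction K with
  | zero => simp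
  | succ K ih =>
    rw [Finset.sum_range_succ, ih, blockSum,
      Finset.sum_range_add_sum_Ico _ (monotone_refineIdx h K.le_succ)]

/-- Past the last point of `σ`, the grid of `τ` only has degenerate intervals `[b, b]`. -/
theorem sum_range_blockSum_eq_rsum {E : Type*} [AddCommMonoid E]
    (h : Set.range σ.t ⊆ Set.range τ.t) (w : ℝ → ℝ → E) (hw : w b b = 0) :
    ∑ k ∈ range σ.n, σ.blockSum τ w k = τ.rsum w := by
  have hb : ∀ j, σ.refineIdx τ σ.n ≤ j → τ.node j = b := fun j hj =>
    le_antisymm (τ.node_mem_Icc j).2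
      ((σ.node_of_le le_rfl).symm.trans_le (node_refineIdx h σ.n ▸ τ.monotone_node hj))
  have htail : ∑ i ∈ Ico (σ.refineIdx τ σ.n) τ.n, w (τ.node i) (τ.node (i + 1)) = 0 :=
    Finset.sum_eq_zero fun i hi => by
      have hi := (Finset.mem_Ico.1 hi).1
      rw [hb i hi, hb (i + 1) (hi.trans i.le_succ), hw]
  rw [sum_range_blockSum h, rsum_eq_sum_range,
    ← Finset.sum_range_add_sum_Ico _ (refineIdx_le h σ.n), htail, add_zero]

theorem blockSum_sub {E : Type*} [AddCommGroup E] (h : Set.range σ.t ⊆ Set.range τ.t)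
    (B : ℝ → E) (k : ℕ) :
    σ.blockSum τ (fun s t => B t - B s) k = B (σ.node (k + 1)) - B (σ.node k) := by
  rw [blockSum, Finset.sum_Ico_eq_sub _ (monotone_refineIdx h k.le_succ),
    Finset.sum_range_sub (fun i => B (τ.node i)), Finset.sum_range_sub (fun i => B (τ.node i)),
    node_refineIdx h, node_refineIdx h]
  abel

theorem sum_range_abs_blockSum_le (h : Set.range σ.t ⊆ Set.range τ.t) (w : ℝ → ℝ → ℝ)
    (hw : w b b = 0) :
    ∑ k ∈ range σ.n, |σ.blockSum τ w k| ≤ τ.rsum (fun s t => |w s t|) := by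
  rw [← sum_range_blockSum_eq_rsum h _ (by simp [hw])]
  exact Finset.sum_le_sum fun k _ => Finset.abs_sum_le_sum_abs _ _

theorem abs_rsum_sub_sum_blockSum_le (h : Set.range σ.t ⊆ Set.range τ.t) {y : ℝ → ℝ} {ε : ℝ}
    (hy : ∀ x ∈ Set.Icc a b, ∀ x' ∈ Set.Icc a b, |x - x'| ≤ σ.mesh → dist (y x) (y x') ≤ ε)
    (w : ℝ → ℝ → ℝ) (hw : w b b = 0) :
    |τ.rsum (fun s t => y s * w s t) - ∑ k ∈ range σ.n, y (σ.node k) * σ.blockSum τ w k|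
      ≤ ε * τ.rsum (fun s t => |w s t|) := by
  rw [← sum_range_blockSum_eq_rsum h _ (by simp [hw]),
    ← sum_range_blockSum_eq_rsum h _ (by simp [hw]), Finset.mul_sum, ← Finset.sum_sub_distrib]
  refine (Finset.abs_sum_le_sum_abs _ _).trans (Finset.sum_le_sum fun k _ => ?_)
  simp only [blockSum, Finset.mul_sum, ← Finset.sum_sub_distrib]
  refine (Finset.abs_sum_le_sum_abs _ _).trans (Finset.sum_le_sum fun i hi => ?_)
  obtain ⟨hki, hik⟩ := node_mem_Icc_of_mem_Ico_refineIdx h hi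
  have hclose : |τ.node i - σ.node k| ≤ σ.mesh := by
    rw [abs_of_nonneg (sub_nonneg.2 hki)]
    linarith [σ.node_succ_sub_le_mesh k]
  rw [← sub_mul, abs_mul]
  exact mul_le_mul_of_nonneg_right
    ((Real.dist_eq _ _).symm.trans_le (hy _ (τ.node_mem_Icc i) _ (σ.node_mem_Icc k) hclose))
    (abs_nonneg _)

end Refinement

theorem rsum_min_node {E : Type*} [AddCommMonoid E]
    (π : GridPartition a b) (w : ℝ → ℝ → E) (hw : ∀ s, w s s = 0) {j : ℕ} (hj : j ≤ π.n) :
    π.rsum (fun s t => w (min s (π.node j)) (min t (π.node j)))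
      = ∑ i ∈ range j, w (π.node i) (π.node (i + 1)) := by
  rw [π.rsum_eq_sum_range, ← Finset.sum_range_add_sum_Ico _ hj]
  have htail : ∑ i ∈ Ico j π.n, w (min (π.node i) (π.node j)) (min (π.node (i + 1)) (π.node j))
      = 0 := Finset.sum_eq_zero fun i hi => by
    have hi := (Finset.mem_Ico.1 hi).1
    rw [min_eq_right (π.monotone_node hi), min_eq_right (π.monotone_node (hi.trans i.le_succ)),
      hw]
  rw [htail, add_zero]
  refine Finset.sum_congr rfl fun i hi => ?_
  have hi := Finset.mem_range.1 hi
  rw [min_eq_left (π.monotone_node hi.le), min_eq_left (π.monotone_node hi)]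

theorem rsum_apply_incr_incr {d : ℕ} (π : GridPartition a b)
    (Y : ℝ → (Fin d → ℝ) →L[ℝ] (Fin d → ℝ) →L[ℝ] ℝ) (X : ℝ → Fin d → ℝ) :
    π.rsum (fun s t => Y s (X t - X s) (X t - X s))
      = ∑ i, ∑ j, π.rsum (fun s t =>
          Y s (Pi.single i 1) (Pi.single j 1) * ((X t i - X s i) * (X t j - X s j))) := by
  have hsingle : ∀ i (c : ℝ), (Pi.single i c : Fin d → ℝ) = c • Pi.single i 1 := fun i c => by
    rw [← Pi.single_smul', smul_eq_mul, mul_one]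
  have hexpand : ∀ (A : (Fin d → ℝ) →L[ℝ] (Fin d → ℝ) →L[ℝ] ℝ) (v w : Fin d → ℝ),
      A v w = ∑ i, ∑ j, A (Pi.single i 1) (Pi.single j 1) * (v i * w j) := fun A v w => by
    conv_lhs => rw [← Finset.univ_sum_single v, ← Finset.univ_sum_single w]
    simp only [map_sum, _root_.sum_apply, hsingle _ (v _), hsingle _ (w _), map_smul,
      smul_apply, smul_eq_mul, Finset.mul_sum]
    rw [Finset.sum_comm]
    exact Finset.sum_congr rfl fun i _ => Finset.sum_congr rfl fun j _ => by ring
  rw [rsum, Finset.sum_congr rfl fun k _ => hexpand (Y _) _ _, Finset.sum_comm]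
  exact Finset.sum_congr rfl fun i _ => Finset.sum_comm

end GridPartition

theorem eventually_dist_le_of_tendsto_mesh {α : Type*} [PseudoMetricSpace α] {a b : ℝ}
    {π : ℕ → GridPartition a b} (hmesh : Tendsto (fun n => (π n).mesh) atTop (𝓝 0))
    {u : ℝ → α} (hu : ContinuousOn u (Set.Icc a b)) {ε : ℝ} (hε : 0 < ε) :
    ∀ᶠ n in atTop, ∀ x ∈ Set.Icc a b, ∀ x' ∈ Set.Icc a b,
      |x - x'| ≤ (π n).mesh → dist (u x) (u x') ≤ ε := by
  obtain ⟨δ, hδ, hu⟩ :=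
    Metric.uniformContinuousOn_iff.1 (isCompact_Icc.uniformContinuousOn_of_continuous hu) ε hε
  filter_upwards [hmesh.eventually_lt_const hδ] with n hn x hx x' hx' hxx'
  exact (hu x hx x' hx' ((Real.dist_eq x x').trans_le hxx' |>.trans_lt hn)).le

theorem tendsto_rsum_norm_rpow_of_memVp {E : Type*} [SeminormedAddCommGroup E] {a b p r : ℝ}
    {π : ℕ → GridPartition a b} (hmesh : Tendsto (fun n => (π n).mesh) atTop (𝓝 0))
    {X : ℝ → E} (hX : MemVp p a b X) (hpr : p < r) (hr : 0 < r) :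
    Tendsto (fun n => (π n).rsum (fun s t => ‖X t - X s‖ ^ r)) atTop (𝓝 0) := by
  obtain ⟨M, hM⟩ := hX.2
  have hM0 : 0 ≤ M := le_trans (Finset.sum_nonneg fun i _ => by positivity) (hM (π 0))
  have hsmall : ∀ θ > 0, ∀ᶠ n in atTop,
      (π n).rsum (fun s t => ‖X t - X s‖ ^ r) ≤ θ ^ (r - p) * M := by
    intro θ hθ
    filter_upwards [eventually_dist_le_of_tendsto_mesh hmesh hX.1 hθ] with n hn
    have hpow : ∀ i, ‖X ((π n).node (i + 1)) - X ((π n).node i)‖ ^ r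
        ≤ θ ^ (r - p) * ‖X ((π n).node (i + 1)) - X ((π n).node i)‖ ^ p := fun i => by
      have hinc : ‖X ((π n).node (i + 1)) - X ((π n).node i)‖ ≤ θ := by
        rw [← dist_eq_norm]
        refine hn _ ((π n).node_mem_Icc _) _ ((π n).node_mem_Icc _) ?_
        rw [abs_of_nonneg (sub_nonneg.2 ((π n).monotone_node i.le_succ))]
        exact (π n).node_succ_sub_le_mesh i
      have hsplit := Real.rpow_add' (norm_nonneg (X ((π n).node (i + 1)) - X ((π n).node i)))
        (by rw [sub_add_cancel]; exact hr.ne' : r - p + p ≠ 0)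
      rw [sub_add_cancel] at hsplit
      rw [hsplit]
      exact mul_le_mul_of_nonneg_right
        (Real.rpow_le_rpow (norm_nonneg _) hinc (sub_pos.2 hpr).le) (by positivity)
    calc (π n).rsum (fun s t => ‖X t - X s‖ ^ r)
        ≤ θ ^ (r - p) * (π n).rsum (fun s t => ‖X t - X s‖ ^ p) := by
          rw [GridPartition.rsum_eq_sum_range, GridPartition.rsum_eq_sum_range, Finset.mul_sum]
          exact Finset.sum_le_sum fun i _ => hpow i
      _ ≤ θ ^ (r - p) * M := mul_le_mul_of_nonneg_left (hM _) (by positivity)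
  refine tendsto_order.2 ⟨fun c hc => Eventually.of_forall fun n =>
    hc.trans_le (Finset.sum_nonneg fun i _ => by positivity), fun c hc => ?_⟩
  have hc' : 0 < c / (M + 1) := by positivity
  filter_upwards [hsmall _ (Real.rpow_pos_of_pos hc' (r - p)⁻¹)] with n hn
  rw [Real.rpow_inv_rpow hc'.le (sub_pos.2 hpr).ne'] at hn
  refine hn.trans_lt ?_
  rw [div_mul_eq_mul_div, div_lt_iff₀ (by positivity)]
  nlinarith

theorem tendsto_rsum_zero_of_abs_le {a b C : ℝ} {π : ℕ → GridPartition a b} {f g : ℝ → ℝ → ℝ}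
    (hg : Tendsto (fun n => (π n).rsum g) atTop (𝓝 0)) (hfg : ∀ s t, |f s t| ≤ C * g s t) :
    Tendsto (fun n => (π n).rsum f) atTop (𝓝 0) := by
  refine squeeze_zero_norm (fun n => ?_) (by simpa using hg.const_mul C)
  rw [GridPartition.rsum, GridPartition.rsum, Finset.mul_sum]
  exact (Finset.abs_sum_le_sum_abs _ _).trans (Finset.sum_le_sum fun i _ => hfg _ _)

/-- The covariation `[f, g] = ([f + g] - [f] - [g]) / 2`, from the quadratic variations
`Qf = [f]`, `Qg = [g]`, `Qs = [f + g]`. -/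
noncomputable def polarCovariation (Qf Qg Qs : ℝ → ℝ) (u : ℝ) : ℝ := (Qs u - Qf u - Qg u) / 2

theorem HasQV.exists_rsum_sq_le {T : ℝ} {π : ℕ → GridPartition 0 T} {f Q : ℝ → ℝ}
    (hf : HasQV π f Q) : ∃ M, ∀ n, (π n).rsum (fun s t => (f t - f s) ^ 2) ≤ M := by
  obtain ⟨M, hM⟩ := (hf.2 T ⟨(π 0).left_le_right, le_rfl⟩).bddAbove_range
  refine ⟨M, fun n => le_trans (le_of_eq ?_) (hM ⟨n, rfl⟩)⟩
  refine Finset.sum_congr rfl fun i _ => ?_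
  rw [min_eq_left ((π n).t_mem_Icc _).2, min_eq_left ((π n).t_mem_Icc _).2]

theorem HasQV.exists_rsum_abs_mul_le {T : ℝ} {π : ℕ → GridPartition 0 T} {f g Qf Qg : ℝ → ℝ}
    (hf : HasQV π f Qf) (hg : HasQV π g Qg) :
    ∃ V, ∀ n, (π n).rsum (fun s t => |(f t - f s) * (g t - g s)|) ≤ V := by
  obtain ⟨Mf, hMf⟩ := hf.exists_rsum_sq_le
  obtain ⟨Mg, hMg⟩ := hg.exists_rsum_sq_le
  refine ⟨(Mf + Mg) / 2, fun n => ?_⟩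
  have hamgm : ∀ x y : ℝ, |x * y| ≤ (x ^ 2 + y ^ 2) / 2 := fun x y => by
    rw [abs_mul]
    nlinarith [sq_nonneg (|x| - |y|), sq_abs x, sq_abs y]
  calc (π n).rsum (fun s t => |(f t - f s) * (g t - g s)|)
      ≤ ((π n).rsum (fun s t => (f t - f s) ^ 2)
          + (π n).rsum (fun s t => (g t - g s) ^ 2)) / 2 := by
        simp only [GridPartition.rsum, ← Finset.sum_add_distrib, Finset.sum_div]
        exact Finset.sum_le_sum fun i _ => hamgm _ _
    _ ≤ (Mf + Mg) / 2 := by linarith [hMf n, hMg n]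

/-- `S m` stands for a Stieltjes sum along `π m` and `C m r` for the sum along a refinement `π r`
with the integrand frozen on the intervals of `π m`. -/
theorem exists_tendsto_of_coarse_approx {S Θ : ℕ → ℝ} {C : ℕ → ℕ → ℝ}
    (hC : ∀ m, Tendsto (C m) atTop (𝓝 (S m)))
    (happrox : ∀ ε > 0, ∀ᶠ m in atTop, ∀ r ≥ m, |S r - S m| ≤ ε ∧ |Θ r - C m r| ≤ ε) :
    ∃ L, Tendsto S atTop (𝓝 L) ∧ Tendsto Θ atTop (𝓝 L) := by
  have hS : CauchySeq S := Metric.cauchySeq_iff'.2 fun ε hε => by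
    obtain ⟨N, hN⟩ := (happrox (ε / 2) (half_pos hε)).exists_forall_of_atTop
    exact ⟨N, fun n hn => by
      rw [Real.dist_eq]; linarith [(hN N le_rfl n hn).1]⟩
  obtain ⟨L, hL⟩ := cauchySeq_tendsto_of_complete hS
  refine ⟨L, hL, Metric.tendsto_atTop.2 fun ε hε => ?_⟩
  obtain ⟨N, hN⟩ := (happrox (ε / 4) (by positivity)).exists_forall_of_atTop
  have hLN : |L - S N| ≤ ε / 4 :=
    le_of_tendsto (hL.sub_const (S N)).abs
      (eventually_atTop.2 ⟨N, fun r hr => (hN N le_rfl r hr).1⟩)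
  obtain ⟨R, hR⟩ := Metric.tendsto_atTop.1 (hC N) (ε / 4) (by positivity)
  refine ⟨max N R, fun r hr => ?_⟩
  have hΘ := (hN N le_rfl r (le_of_max_le_left hr)).2
  have hCN := hR r (le_of_max_le_right hr)
  rw [Real.dist_eq] at hCN ⊢
  linarith [abs_sub_le (Θ r) (C N r) L, abs_sub_le (C N r) (S N) L, abs_sub_comm L (S N)]

namespace IncreasingSeq

variable {T : ℝ} {π : ℕ → GridPartition 0 T} {f g Qf Qg Qs : ℝ → ℝ}

theorem range_subset (hπ : IncreasingSeq π) {m r : ℕ} (h : m ≤ r) :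
    Set.range (π m).t ⊆ Set.range (π r).t :=
  monotone_nat_of_le_succ (f := fun n => Set.range (π n).t) hπ.1 h

theorem tendsto_blockSum_sq (hπ : IncreasingSeq π) {Q : ℝ → ℝ} (hf : HasQV π f Q)
    (m k : ℕ) :
    Tendsto (fun r => (π m).blockSum (π r) (fun s t => (f t - f s) ^ 2) k) atTop
      (𝓝 (Q ((π m).node (k + 1)) - Q ((π m).node k))) := by
  have hQ : ∀ j, Tendsto (fun r => ∑ i ∈ range ((π m).refineIdx (π r) j),
      (f ((π r).node (i + 1)) - f ((π r).node i)) ^ 2) atTop (𝓝 (Q ((π m).node j))) := by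
    intro j
    refine (hf.2 _ ((π m).node_mem_Icc j)).congr' ?_
    filter_upwards [eventually_ge_atTop m] with r hr
    have hsub := hπ.range_subset hr
    rw [← GridPartition.node_refineIdx hsub j]
    exact (π r).rsum_min_node (fun s t => (f t - f s) ^ 2) (by simp)
      (GridPartition.refineIdx_le hsub j)
  refine ((hQ (k + 1)).sub (hQ k)).congr' ?_
  filter_upwards [eventually_ge_atTop m] with r hr
  rw [GridPartition.blockSum, Finset.sum_Ico_eq_sub _
    (GridPartition.monotone_refineIdx (hπ.range_subset hr) k.le_succ)]

theorem tendsto_blockSum_mul (hπ : IncreasingSeq π) (hf : HasQV π f Qf) (hg : HasQV π g Qg)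
    (hs : HasQV π (fun t => f t + g t) Qs) (m k : ℕ) :
    Tendsto (fun r => (π m).blockSum (π r) (fun s t => (f t - f s) * (g t - g s)) k) atTop
      (𝓝 (polarCovariation Qf Qg Qs ((π m).node (k + 1))
        - polarCovariation Qf Qg Qs ((π m).node k))) := by
  have hpolar : ∀ r, (π m).blockSum (π r) (fun s t => (f t - f s) * (g t - g s)) k
      = ((π m).blockSum (π r) (fun s t => (f t + g t - (f s + g s)) ^ 2) k
        - (π m).blockSum (π r) (fun s t => (f t - f s) ^ 2) k
        - (π m).blockSum (π r) (fun s t => (g t - g s) ^ 2) k) / 2 := fun r => by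
    simp only [GridPartition.blockSum, ← Finset.sum_sub_distrib, Finset.sum_div]
    exact Finset.sum_congr rfl fun i _ => by ring
  simp only [hpolar]
  convert (((hπ.tendsto_blockSum_sq hs m k).sub (hπ.tendsto_blockSum_sq hf m k)).sub
    (hπ.tendsto_blockSum_sq hg m k)).div_const 2 using 2
  simp only [polarCovariation]
  ring

/-- Each increment of `[f, g]` is a limit of block sums, so `[f, g]` inherits the bound on the
total variation of the discrete covariations. -/
theorem rsum_abs_polarCovariation_sub_le (hπ : IncreasingSeq π) (hf : HasQV π f Qf)
    (hg : HasQV π g Qg) (hs : HasQV π (fun t => f t + g t) Qs) {V : ℝ}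
    (hV : ∀ n, (π n).rsum (fun s t => |(f t - f s) * (g t - g s)|) ≤ V) (m : ℕ) :
    (π m).rsum (fun s t => |polarCovariation Qf Qg Qs t - polarCovariation Qf Qg Qs s|) ≤ V := by
  rw [GridPartition.rsum_eq_sum_range]
  refine le_of_tendsto
    (tendsto_finsetSum _ fun k _ => (hπ.tendsto_blockSum_mul hf hg hs m k).abs) ?_
  filter_upwards [eventually_ge_atTop m] with r hr
  exact (GridPartition.sum_range_abs_blockSum_le (hπ.range_subset hr) _ (by simp)).trans (hV r)

theorem exists_tendsto_rsum_polarCovariation (hπ : IncreasingSeq π) (hf : HasQV π f Qf)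
    (hg : HasQV π g Qg) (hs : HasQV π (fun t => f t + g t) Qs) {y : ℝ → ℝ}
    (hy : ContinuousOn y (Set.Icc 0 T)) :
    ∃ L, Tendsto (fun n => (π n).rsum (fun s t =>
          y s * (polarCovariation Qf Qg Qs t - polarCovariation Qf Qg Qs s))) atTop (𝓝 L) ∧
      Tendsto (fun n => (π n).rsum (fun s t => y s * ((f t - f s) * (g t - g s))))
        atTop (𝓝 L) := by
  set P := polarCovariation Qf Qg Qs
  obtain ⟨V, hV⟩ := hf.exists_rsum_abs_mul_le hg
  have hV0 : 0 ≤ V := le_trans (Finset.sum_nonneg fun i _ => abs_nonneg _) (hV 0)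
  have hVP := hπ.rsum_abs_polarCovariation_sub_le hf hg hs hV
  refine exists_tendsto_of_coarse_approx (C := fun m r => ∑ k ∈ range (π m).n,
      y ((π m).node k) * (π m).blockSum (π r) (fun s t => (f t - f s) * (g t - g s)) k)
    (fun m => ?_) (fun ε hε => ?_)
  · rw [GridPartition.rsum_eq_sum_range]
    exact tendsto_finsetSum _ fun k _ => (hπ.tendsto_blockSum_mul hf hg hs m k).const_mul _
  · have hε' : 0 < ε / (V + 1) := by positivity
    have hεV : ε / (V + 1) * V ≤ ε := by
      rw [div_mul_eq_mul_div, div_le_iff₀ (by positivity)]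
      nlinarith
    filter_upwards [eventually_dist_le_of_tendsto_mesh hπ.2 hy hε'] with m hm r hr
    have hsub := hπ.range_subset hr
    constructor
    · have hS := GridPartition.abs_rsum_sub_sum_blockSum_le hsub hm (fun s t => P t - P s)
        (sub_self _)
      rw [(π m).rsum_eq_sum_range (fun s t => y s * (P t - P s))]
      simp only [GridPartition.blockSum_sub hsub] at hS
      exact hS.trans ((mul_le_mul_of_nonneg_left (hVP r) hε'.le).trans hεV)
    · exact (GridPartition.abs_rsum_sub_sum_blockSum_le hsub hm _ (by simp)).trans
        ((mul_le_mul_of_nonneg_left (hV r) hε'.le).trans hεV)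

end IncreasingSeq

theorem abs_taylor_two_remainders_le {φ φ' φ'' : ℝ → ℝ} {M : ℝ}
    (hφ : ∀ θ, HasDerivAt φ (φ' θ) θ) (hφ' : ∀ θ, HasDerivAt φ' (φ'' θ) θ)
    (hM : ∀ θ ∈ Set.Icc (0 : ℝ) 1, |φ'' θ - φ'' 0| ≤ M) :
    |φ' 1 - φ' 0 - φ'' 0| ≤ M ∧ |φ 1 - φ 0 - φ' 0 - φ'' 0 / 2| ≤ M := by
  have hM0 : 0 ≤ M := by simpa using hM 0 ⟨le_rfl, zero_le_one⟩
  have h1 : ∀ θ ∈ Set.Icc (0 : ℝ) 1, |φ' θ - φ' 0 - θ * φ'' 0| ≤ M * θ := fun θ hθ => by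
    have := norm_image_sub_le_of_norm_deriv_le_segment' (f := fun θ => φ' θ - θ * φ'' 0)
      (fun θ _ => ((hφ' θ).sub (hasDerivAt_mul_const (φ'' 0))).hasDerivWithinAt)
      (fun θ hθ => hM θ (Set.Ico_subset_Icc_self hθ)) θ hθ
    rw [Real.norm_eq_abs] at this
    convert this using 2 <;> ring
  have hsq : ∀ θ, HasDerivAt (fun θ : ℝ => θ ^ 2 / 2 * φ'' 0) (θ * φ'' 0) θ := fun θ =>
    (((hasDerivAt_pow 2 θ).div_const 2).mul_const (φ'' 0)).congr_deriv (by ring)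
  refine ⟨by simpa using h1 1 ⟨zero_le_one, le_rfl⟩, ?_⟩
  have h2 := norm_image_sub_le_of_norm_deriv_le_segment_01'
    (f := fun θ => φ θ - θ * φ' 0 - θ ^ 2 / 2 * φ'' 0)
    (fun θ _ => (((hφ θ).sub (hasDerivAt_mul_const (φ' 0))).sub (hsq θ)).hasDerivWithinAt)
    (fun θ hθ => (h1 θ (Set.Ico_subset_Icc_self hθ)).trans
      (mul_le_of_le_one_right hM0 hθ.2.le))
  rw [Real.norm_eq_abs] at h2
  convert h2 using 2
  ring

section NormedSpace

variable {E : Type*} [NormedAddCommGroup E] [NormedSpace ℝ E]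

theorem abs_fderiv_fderiv_apply_sub_le (F : E → ℝ) (x y v w : E) :
    |fderiv ℝ (fderiv ℝ F) x v w - fderiv ℝ (fderiv ℝ F) y v w|
      ≤ ‖iteratedFDeriv ℝ 2 F x - iteratedFDeriv ℝ 2 F y‖ * (‖v‖ * ‖w‖) := by
  have h : fderiv ℝ (fderiv ℝ F) x v w - fderiv ℝ (fderiv ℝ F) y v w
      = (iteratedFDeriv ℝ 2 F x - iteratedFDeriv ℝ 2 F y) ![v, w] := by
    simp [iteratedFDeriv_two_apply]
  rw [h, ← Real.norm_eq_abs]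
  simpa [Fin.prod_univ_two] using
    (iteratedFDeriv ℝ 2 F x - iteratedFDeriv ℝ 2 F y).le_opNorm ![v, w]

theorem abs_taylor_two_remainders_le_of_holder {F : E → ℝ} (hF : ContDiff ℝ 2 F) {C α : ℝ}
    (hC : 0 ≤ C) (hα : 0 ≤ α)
    (hH : ∀ x y, ‖iteratedFDeriv ℝ 2 F x - iteratedFDeriv ℝ 2 F y‖ ≤ C * ‖x - y‖ ^ α)
    (x y : E) :
    |fderiv ℝ F y (y - x) - fderiv ℝ F x (y - x) - fderiv ℝ (fderiv ℝ F) x (y - x) (y - x)|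
        ≤ C * ‖y - x‖ ^ (α + 2) ∧
      |F y - F x - fderiv ℝ F x (y - x) - fderiv ℝ (fderiv ℝ F) x (y - x) (y - x) / 2|
        ≤ C * ‖y - x‖ ^ (α + 2) := by
  set Δ := y - x
  have hc : ∀ θ : ℝ, HasDerivAt (fun θ : ℝ => x + θ • Δ) Δ θ := fun θ => by
    simpa using ((hasDerivAt_id θ).smul_const Δ).const_add x
  have hDF : Differentiable ℝ (fderiv ℝ F) :=
    (hF.fderiv_right (by norm_num : (1 : WithTop ℕ∞) + 1 ≤ 2)).differentiable one_ne_zero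
  have hφ : ∀ θ : ℝ, HasDerivAt (fun θ : ℝ => F (x + θ • Δ)) (fderiv ℝ F (x + θ • Δ) Δ) θ :=
    fun θ => ((hF.differentiable (by norm_num)) _).hasFDerivAt.comp_hasDerivAt θ (hc θ)
  have hφ' : ∀ θ : ℝ, HasDerivAt (fun θ : ℝ => fderiv ℝ F (x + θ • Δ) Δ)
      (fderiv ℝ (fderiv ℝ F) (x + θ • Δ) Δ Δ) θ := fun θ => by
    simpa using ((hDF _).hasFDerivAt.comp_hasDerivAt θ (hc θ)).clm_apply (hasDerivAt_const θ Δ)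
  have hM : ∀ θ ∈ Set.Icc (0 : ℝ) 1, |fderiv ℝ (fderiv ℝ F) (x + θ • Δ) Δ Δ
      - fderiv ℝ (fderiv ℝ F) (x + (0 : ℝ) • Δ) Δ Δ| ≤ C * ‖Δ‖ ^ α * (‖Δ‖ * ‖Δ‖) := by
    intro θ hθ
    refine (abs_fderiv_fderiv_apply_sub_le F _ _ Δ Δ).trans (mul_le_mul_of_nonneg_right
      ((hH _ _).trans (mul_le_mul_of_nonneg_left ?_ hC)) (by positivity))
    rw [zero_smul, add_zero, add_sub_cancel_left, norm_smul, Real.norm_of_nonneg hθ.1]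
    exact Real.rpow_le_rpow (mul_nonneg hθ.1 (norm_nonneg _))
      (mul_le_of_le_one_left (norm_nonneg _) hθ.2) hα
  have hpow : C * ‖Δ‖ ^ α * (‖Δ‖ * ‖Δ‖) = C * ‖Δ‖ ^ (α + 2) := by
    rw [Real.rpow_add' (norm_nonneg _) (by linarith : (0 : ℝ) < α + 2).ne', Real.rpow_two, sq,
      mul_assoc]
  have hx : x + Δ = y := add_sub_cancel x y
  simpa [hpow, hx] using abs_taylor_two_remainders_le hφ hφ' hM

theorem tendsto_rsum_taylor_two_remainders {a b p C α : ℝ} {π : ℕ → GridPartition a b}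
    (hmesh : Tendsto (fun n => (π n).mesh) atTop (𝓝 0)) {X : ℝ → E} (hX : MemVp p a b X)
    {F : E → ℝ} (hF : ContDiff ℝ 2 F) (hC : 0 ≤ C) (hα : 0 ≤ α)
    (hH : ∀ x y, ‖iteratedFDeriv ℝ 2 F x - iteratedFDeriv ℝ 2 F y‖ ≤ C * ‖x - y‖ ^ α)
    (hpα : p < α + 2) :
    Tendsto (fun n => (π n).rsum (fun s t => fderiv ℝ F (X t) (X t - X s)
        - fderiv ℝ F (X s) (X t - X s) - fderiv ℝ (fderiv ℝ F) (X s) (X t - X s) (X t - X s)))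
        atTop (𝓝 0) ∧
      Tendsto (fun n => (π n).rsum (fun s t => F (X t) - F (X s) - fderiv ℝ F (X s) (X t - X s)
        - fderiv ℝ (fderiv ℝ F) (X s) (X t - X s) (X t - X s) / 2)) atTop (𝓝 0) := by
  have hvar := tendsto_rsum_norm_rpow_of_memVp hmesh hX hpα (by linarith)
  exact ⟨tendsto_rsum_zero_of_abs_le hvar fun s t =>
      (abs_taylor_two_remainders_le_of_holder hF hC hα hH (X s) (X t)).1,
    tendsto_rsum_zero_of_abs_le hvar fun s t =>
      (abs_taylor_two_remainders_le_of_holder hF hC hα hH (X s) (X t)).2⟩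

theorem tendsto_rsum_gamma {a b γ S : ℝ} {π : ℕ → GridPartition a b} {F : E → ℝ} {X : ℝ → E}
    (hquad : Tendsto (fun n => (π n).rsum (fun s t =>
      fderiv ℝ (fderiv ℝ F) (X s) (X t - X s) (X t - X s))) atTop (𝓝 S))
    (hremDF : Tendsto (fun n => (π n).rsum (fun s t => fderiv ℝ F (X t) (X t - X s)
      - fderiv ℝ F (X s) (X t - X s) - fderiv ℝ (fderiv ℝ F) (X s) (X t - X s) (X t - X s)))
      atTop (𝓝 0))
    (hremF : Tendsto (fun n => (π n).rsum (fun s t => F (X t) - F (X s)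
      - fderiv ℝ F (X s) (X t - X s) - fderiv ℝ (fderiv ℝ F) (X s) (X t - X s) (X t - X s) / 2))
      atTop (𝓝 0)) :
    Tendsto (fun n => (π n).rsum (fun s t => fderiv ℝ F (X s) (X t - X s)
        + γ * (fderiv ℝ F (X t) (X t - X s) - fderiv ℝ F (X s) (X t - X s))))
      atTop (𝓝 (F (X b) - F (X a) + (1 / 2) * (2 * γ - 1) * S)) := by
  have hsplit : ∀ n, (π n).rsum (fun s t => fderiv ℝ F (X s) (X t - X s)
        + γ * (fderiv ℝ F (X t) (X t - X s) - fderiv ℝ F (X s) (X t - X s)))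
      = (π n).rsum (fun s t => F (X t) - F (X s))
        + ((γ - 1 / 2) * (π n).rsum (fun s t =>
            fderiv ℝ (fderiv ℝ F) (X s) (X t - X s) (X t - X s))
          + (γ * (π n).rsum (fun s t => fderiv ℝ F (X t) (X t - X s)
              - fderiv ℝ F (X s) (X t - X s)
              - fderiv ℝ (fderiv ℝ F) (X s) (X t - X s) (X t - X s))
            - (π n).rsum (fun s t => F (X t) - F (X s) - fderiv ℝ F (X s) (X t - X s)
              - fderiv ℝ (fderiv ℝ F) (X s) (X t - X s) (X t - X s) / 2))) := fun n => by
    simp only [GridPartition.rsum, Finset.mul_sum, ← Finset.sum_add_distrib,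
      ← Finset.sum_sub_distrib]
    exact Finset.sum_congr rfl fun i _ => by ring
  simp only [hsplit, GridPartition.rsum_sub (G := fun u => F (X u))]
  convert tendsto_const_nhds.add ((hquad.const_mul (γ - 1 / 2)).add
    ((hremDF.const_mul γ).sub hremF)) using 2
  ring

end NormedSpace

theorem pathwise_follmer_ito_general {d : ℕ} (T p α γ : ℝ)
    (hα : α > max (p - 2) 0)
    (π : ℕ → GridPartition 0 T) (hπ : IncreasingSeq π)
    (X : ℝ → Fin d → ℝ) (hX : MemVp p 0 T X)
    (F : (Fin d → ℝ) → ℝ) (hF : ContDiff ℝ 2 F)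
    (hHolder : ∃ C : ℝ, ∀ x y : Fin d → ℝ,
      ‖iteratedFDeriv ℝ 2 F x - iteratedFDeriv ℝ 2 F y‖ ≤ C * ‖x - y‖ ^ α)
    (Q : Fin d → ℝ → ℝ) (QS : Fin d → Fin d → ℝ → ℝ)
    (hQ : ∀ i, HasQV π (fun t => X t i) (Q i))
    (hQS : ∀ i j, HasQV π (fun t => X t i + X t j) (QS i j)) :
    ∃ I : Fin d → Fin d → ℝ,
      (∀ i j : Fin d,
        Tendsto (fun n => (π n).rsum (fun s t =>
            (fderiv ℝ (fderiv ℝ F) (X s) (Pi.single i 1) (Pi.single j 1)) *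
              ((QS i j t - Q i t - Q j t) / 2 - (QS i j s - Q i s - Q j s) / 2)))
          atTop (𝓝 (I i j))) ∧
      Tendsto (fun n => (π n).rsum (fun s t =>
          fderiv ℝ F (X s) (X t - X s) +
            γ * (fderiv ℝ F (X t) (X t - X s) - fderiv ℝ F (X s) (X t - X s))))
        atTop
        (𝓝 (F (X T) - F (X 0) + (1 / 2) * (2 * γ - 1) * ∑ i, ∑ j, I i j)) := by
  obtain ⟨C, hC⟩ := hHolder
  have hα0 : 0 ≤ α := (le_max_right _ _).trans hα.le
  have hpα : p < α + 2 := by linarith [(le_max_left (p - 2) 0).trans_lt hα]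
  obtain ⟨hremDF, hremF⟩ := tendsto_rsum_taylor_two_remainders hπ.2 hX hF (le_max_right C 0)
    hα0 (fun x y => (hC x y).trans (by gcongr; exact le_max_left C 0)) hpα
  have hD2 : Continuous (fderiv ℝ (fderiv ℝ F)) :=
    (hF.fderiv_right (by norm_num : (1 : WithTop ℕ∞) + 1 ≤ 2)).continuous_fderiv one_ne_zero
  have hD2X : ∀ i j : Fin d, ContinuousOn
      (fun s => fderiv ℝ (fderiv ℝ F) (X s) (Pi.single i 1) (Pi.single j 1)) (Set.Icc 0 T) :=
    fun i j => ((hD2.clm_apply continuous_const).clm_apply continuous_const).comp_continuousOn hX.1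
  choose I hI hquad using fun i j =>
    hπ.exists_tendsto_rsum_polarCovariation (hQ i) (hQ j) (hQS i j) (hD2X i j)
  refine ⟨I, hI, tendsto_rsum_gamma ?_ hremDF hremF⟩
  simp only [GridPartition.rsum_apply_incr_incr]
  exact tendsto_finsetSum _ fun i _ => tendsto_finsetSum _ fun j _ => hquad i j

/-- pathwise Föllmer–Itô formula:
`F(X_T) = F(X_0) + γ-∫ DF(X) d^{π_n} X − ½(2γ−1) Σ_{i,j} ∫ D²_{i,j}F(X) d^{π_n}[X^i,X^j]`,
where both integrals are limits of Riemann sums along the partition sequence. -/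
theorem pathwise_follmer_ito {d : ℕ} (T p α γ : ℝ) (hT : 0 < T)
    (hp : 1 ≤ p) (hp3 : p < 3) (hγ : γ ∈ Set.Icc (0 : ℝ) 1)
    (hα : α > max (p - 2) 0)
    (π : ℕ → GridPartition 0 T) (hπ : IncreasingSeq π)
    (X : ℝ → Fin d → ℝ) (hX : MemVp p 0 T X)
    (F : (Fin d → ℝ) → ℝ) (hF : ContDiff ℝ 2 F)
    (hHolder : ∃ C : ℝ, ∀ x y : Fin d → ℝ,
      ‖iteratedFDeriv ℝ 2 F x - iteratedFDeriv ℝ 2 F y‖ ≤ C * ‖x - y‖ ^ α)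
    (Q : Fin d → ℝ → ℝ) (QS : Fin d → Fin d → ℝ → ℝ)
    (hQ : ∀ i, HasQV π (fun t => X t i) (Q i))
    (hQS : ∀ i j, HasQV π (fun t => X t i + X t j) (QS i j)) :
    ∃ I : Fin d → Fin d → ℝ,
      (∀ i j : Fin d,
        Tendsto (fun n => (π n).rsum (fun s t =>
            (fderiv ℝ (fderiv ℝ F) (X s) (Pi.single i 1) (Pi.single j 1)) *
              ((QS i j t - Q i t - Q j t) / 2 - (QS i j s - Q i s - Q j s) / 2)))
          atTop (𝓝 (I i j))) ∧
      Tendsto (fun n => (π n).rsum (fun s t =>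
          fderiv ℝ F (X s) (X t - X s) +
            γ * (fderiv ℝ F (X t) (X t - X s) - fderiv ℝ F (X s) (X t - X s))))
        atTop
        (𝓝 (F (X T) - F (X 0) + (1 / 2) * (2 * γ - 1) * ∑ i, ∑ j, I i j)) :=
  pathwise_follmer_ito_general T p α γ hα π hπ X hX F hF hHolder Q QS hQ hQS
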